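/- arXiv:2106.03080 — 6 statements merged into one kernel-verified Lean document; each statement's English description precedes it below -/
import Mathlib

section
/- Let G be a finite simple connected graph, let W be a subset of V(G) with at least two elements, let a ∈ W and b ∈ V(G) \ W. If the pair a, b is not doubly resolved by any pair of vertices of W, then for every w ∈ W one has d(b,w) = d(b,a) + d(a,w); in particular, for each w ∈ W there exists a shortest path between b and w that contains a. -/
open SimpleGraph

/-- Vertices `u, v` are doubly resolved by vertices `x, y` if
`d(u,x) − d(v,x) ≠ d(u,y) − d(v,y)`. -/
def doublyResolves {V : Type*} (G : SimpleGraph V) (x y u v : V) : Prop :=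
  (G.dist u x : ℤ) - (G.dist v x : ℤ) ≠ (G.dist u y : ℤ) - (G.dist v y : ℤ)

/-- A set `W` of vertices is a doubly resolving set for `G` if every two distinct
vertices of `G` are doubly resolved by some two vertices of `W`. -/
def IsDoublyResolvingSet {V : Type*} (G : SimpleGraph V) (W : Set V) : Prop :=
  ∀ u v : V, u ≠ v → ∃ x ∈ W, ∃ y ∈ W, doublyResolves G x y u v

/-- The doubly resolving number `ψ(G)`: the minimum cardinality of a doubly
resolving set for `G`. -/
noncomputable def psi {V : Type*} (G : SimpleGraph V) : ℕ :=
  sInf {k | ∃ W : Finset V, W.card = k ∧ IsDoublyResolvingSet G ↑W}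

-- Taking `x = a` makes `d(a,x) = 0`, so failing to resolve with `y = w` is exactly the identity.
theorem dist_eq_dist_add_dist_of_not_doublyResolves {V : Type*} {G : SimpleGraph V} {a b w : V}
    (h : ¬ doublyResolves G a w a b) : G.dist b w = G.dist b a + G.dist a w := by
  unfold doublyResolves at h
  rw [not_not, dist_self] at h
  omega

theorem SimpleGraph.Reachable.exists_walk_length_eq_dist_mem_support {V : Type*}
    {G : SimpleGraph V} {a b w : V} (hba : G.Reachable b a) (haw : G.Reachable a w)
    (h : G.dist b w = G.dist b a + G.dist a w) :
    ∃ p : G.Walk b w, p.length = G.dist b w ∧ a ∈ p.support := by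
  obtain ⟨p, hp⟩ := hba.exists_walk_length_eq_dist
  obtain ⟨q, hq⟩ := haw.exists_walk_length_eq_dist
  refine ⟨p.append q, by rw [Walk.length_append, hp, hq, h], ?_⟩
  rw [Walk.mem_support_append_iff]
  exact Or.inl p.end_mem_support

theorem stmt_0_general {V : Type*} (G : SimpleGraph V) (hG : G.Connected)
    (W : Set V) (a b : V) (ha : a ∈ W)
    (h : ∀ x ∈ W, ∀ y ∈ W, ¬ doublyResolves G x y a b) :
    ∀ w ∈ W, G.dist b w = G.dist b a + G.dist a w ∧
      ∃ p : G.Walk b w, p.length = G.dist b w ∧ a ∈ p.support := by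
  intro w hw
  have hdist := dist_eq_dist_add_dist_of_not_doublyResolves (h a ha w hw)
  exact ⟨hdist, (hG b a).exists_walk_length_eq_dist_mem_support (hG a w) hdist⟩

/-- If `a ∈ W`, `b ∉ W`, `|W| ≥ 2`, and `a, b` are not doubly resolved by any pair of
vertices of `W`, then for every `w ∈ W`, `d(b,w) = d(b,a) + d(a,w)`; in particular there
is a shortest path from `b` to `w` containing `a`. -/
theorem stmt_0 {V : Type*} [Fintype V] (G : SimpleGraph V) (hG : G.Connected)
    (W : Set V) (hW : 2 ≤ W.ncard) (a b : V) (ha : a ∈ W) (hb : b ∉ W)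
    (h : ∀ x ∈ W, ∀ y ∈ W, ¬ doublyResolves G x y a b) :
    ∀ w ∈ W, G.dist b w = G.dist b a + G.dist a w ∧
      ∃ p : G.Walk b w, p.length = G.dist b w ∧ a ∈ p.support :=
  stmt_0_general G hG W a b ha h
end

section
/- Let G be a finite simple connected graph, let u, v be twin vertices of G, and let W be a doubly resolving set for G with u ∈ W and v ∉ W. Then (W \ {u}) ∪ {v} is also a doubly resolving set for G. -/
/-! Twins `u, v` are exchanged by the transposition `(u v)`, which is then an automorphism of
`G`; automorphisms preserve distances and hence carry doubly resolving sets to doubly resolving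
sets, and `(u v)` maps `W` onto `(W \ {u}) ∪ {v}`. -/

open SimpleGraph

namespace SimpleGraph

variable {V V' : Type*} {G : SimpleGraph V} {G' : SimpleGraph V'}

lemma Hom.edist_map_le (f : G →g G') (a b : V) : G'.edist (f a) (f b) ≤ G.edist a b :=
  le_iInf fun p => (edist_le (p.map f)).trans_eq (by rw [Walk.length_map])

lemma Iso.edist_map (φ : G ≃g G') (a b : V) : G'.edist (φ a) (φ b) = G.edist a b :=
  le_antisymm (φ.toHom.edist_map_le a b) <| by
    simpa using φ.symm.toHom.edist_map_le (φ a) (φ b)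

lemma Iso.dist_map (φ : G ≃g G') (a b : V) : G'.dist (φ a) (φ b) = G.dist a b :=
  congrArg ENat.toNat (φ.edist_map a b)

lemma adj_iff_adj_of_twins {u v w : V} (htwin : G.neighborSet u \ {v} = G.neighborSet v \ {u})
    (hwu : w ≠ u) (hwv : w ≠ v) : G.Adj u w ↔ G.Adj v w := by
  simpa [hwu, hwv] using Set.ext_iff.mp htwin w

def Iso.swapOfTwins [DecidableEq V] {u v : V}
    (htwin : G.neighborSet u \ {v} = G.neighborSet v \ {u}) : G ≃g G where
  toEquiv := Equiv.swap u v
  map_rel_iff' {a b} := by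
    simp only [Equiv.swap_apply_def]
    split_ifs <;> grind [adj_comm, SimpleGraph.irrefl, adj_iff_adj_of_twins htwin]

lemma IsDoublyResolvingSet.image_iso {W : Set V} (hW : IsDoublyResolvingSet G W) (φ : G ≃g G') :
    IsDoublyResolvingSet G' (φ '' W) := by
  intro p q hpq
  obtain ⟨x, hx, y, hy, hxy⟩ := hW (φ.symm p) (φ.symm q) (φ.symm.injective.ne hpq)
  refine ⟨φ x, ⟨x, hx, rfl⟩, φ y, ⟨y, hy, rfl⟩, ?_⟩
  rwa [doublyResolves, ← φ.dist_map, ← φ.dist_map, ← φ.dist_map, ← φ.dist_map,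
    RelIso.apply_symm_apply, RelIso.apply_symm_apply] at hxy

end SimpleGraph

theorem stmt_2_general {V : Type*} (G : SimpleGraph V)
    (u v : V)
    (htwin : G.neighborSet u \ {v} = G.neighborSet v \ {u})
    (W : Set V) (hW : IsDoublyResolvingSet G W) (huW : u ∈ W) (hvW : v ∉ W) :
    IsDoublyResolvingSet G ((W \ {u}) ∪ {v}) := by
  classical
  have huv : u ≠ v := ne_of_mem_of_not_mem huW hvW
  rw [Set.union_singleton, Set.insert_sdiff_singleton_comm huv.symm,
    ← Equiv.image_swap_of_mem_of_notMem huW hvW]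
  exact hW.image_iso (Iso.swapOfTwins htwin)

/-- If `u, v` are twin vertices of a connected graph `G` and `W` is a doubly resolving
set with `u ∈ W`, `v ∉ W`, then `(W \ {u}) ∪ {v}` is also a doubly resolving set. -/
theorem stmt_2 {V : Type*} [Fintype V] (G : SimpleGraph V) (hG : G.Connected)
    (u v : V) (huv : u ≠ v)
    (htwin : G.neighborSet u \ {v} = G.neighborSet v \ {u})
    (W : Set V) (hW : IsDoublyResolvingSet G W) (huW : u ∈ W) (hvW : v ∉ W) :
    IsDoublyResolvingSet G ((W \ {u}) ∪ {v}) :=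
  stmt_2_general G u v htwin W hW huW hvW
end

section
/- Let K_{r,s} be the complete bipartite graph with 1 ≤ r ≤ 2, r ≤ s, and total order n = r + s ≥ 3. Then ψ(K_{r,s}) = n − 1. -/
open SimpleGraph

/-!
A doubly resolving set `W` cannot miss two vertices `u ≠ v` for which `z ↦ d(u,z) − d(v,z)` is
constant on `W`. In `K_{r,s}` two vertices on the same side are twins (the difference vanishes off
them), so `W` misses at most one vertex per side. If it missed `inl a` and `inr b`, then since
`r ≤ 2` the left vertices of `W` all equal a single `a'`, and `d(inl a', z) − d(inr b, z) = −1` for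
every `z ∈ W`. Hence `ψ ≥ n − 1`. Conversely, all vertices but one left vertex form a doubly
resolving set once `s ≥ 2`.
-/

open Sum

namespace SimpleGraph

variable {V : Type*} {G : SimpleGraph V} {u v w : V}

lemma dist_eq_two_of_adj_of_adj (huv : u ≠ v) (hnadj : ¬G.Adj u v) (huw : G.Adj u w)
    (hwv : G.Adj w v) : G.dist u v = 2 := by
  have h : G.edist u v = 2 :=
    edist_eq_two_iff.mpr ⟨huv, hnadj, w, G.mem_commonNeighbors.mpr ⟨huw, hwv.symm⟩⟩
  simp [dist, h]

lemma doublyResolves_comm {x y : V} : doublyResolves G x y u v ↔ doublyResolves G x y v u := by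
  unfold doublyResolves
  constructor <;> exact fun h h' ↦ h (by linarith)

lemma doublyResolves_self (h : G.dist u v ≠ 0) : doublyResolves G u v u v := by
  simp only [doublyResolves, dist_self, dist_comm (u := v) (v := u)]
  omega

lemma IsDoublyResolvingSet.not_forall_dist_sub_eq {W : Set V} (hW : IsDoublyResolvingSet G W)
    (huv : u ≠ v) (c : ℤ) : ¬∀ z ∈ W, (G.dist u z : ℤ) - G.dist v z = c := by
  intro hc
  obtain ⟨x, hx, y, hy, hxy⟩ := hW u v huv
  exact hxy ((hc x hx).trans (hc y hy).symm)

lemma IsDoublyResolvingSet.mem_or_mem_of_dist_eq {W : Set V} (hW : IsDoublyResolvingSet G W)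
    (huv : u ≠ v) (htwin : ∀ z, z ≠ u → z ≠ v → G.dist u z = G.dist v z) : u ∈ W ∨ v ∈ W := by
  by_contra! h
  refine hW.not_forall_dist_sub_eq huv 0 fun z hz ↦ ?_
  rw [htwin z (fun hzu ↦ h.1 (hzu ▸ hz)) (fun hzv ↦ h.2 (hzv ▸ hz)), sub_self]

lemma psi_le_card {W : Finset V} (hW : IsDoublyResolvingSet G W) : psi G ≤ W.card :=
  Nat.sInf_le ⟨W, rfl, hW⟩

lemma exists_isDoublyResolvingSet_card_eq_psi {W₀ : Finset V}
    (hW₀ : IsDoublyResolvingSet G W₀) :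
    ∃ W : Finset V, IsDoublyResolvingSet G W ∧ W.card = psi G := by
  obtain ⟨W, hcard, hW⟩ := Nat.sInf_mem (s := {k | ∃ W : Finset V, W.card = k ∧
    IsDoublyResolvingSet G ↑W}) ⟨_, W₀, rfl, hW₀⟩
  exact ⟨W, hW, hcard⟩

section completeBipartite

variable {α β : Type*}

lemma completeBipartiteGraph_dist_inl_inr (a : α) (b : β) :
    (completeBipartiteGraph α β).dist (inl a) (inr b) = 1 :=
  dist_eq_one_iff_adj.mpr (by simp)

lemma completeBipartiteGraph_dist_inr_inl (a : α) (b : β) :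
    (completeBipartiteGraph α β).dist (inr b) (inl a) = 1 :=
  dist_comm.trans (completeBipartiteGraph_dist_inl_inr a b)

lemma completeBipartiteGraph_dist_inl_inl [Nonempty β] {a a' : α} (h : a ≠ a') :
    (completeBipartiteGraph α β).dist (inl a) (inl a') = 2 :=
  dist_eq_two_of_adj_of_adj (w := inr (Classical.arbitrary β)) (by simpa) (by simp) (by simp)
    (by simp)

lemma completeBipartiteGraph_dist_inr_inr [Nonempty α] {b b' : β} (h : b ≠ b') :
    (completeBipartiteGraph α β).dist (inr b) (inr b') = 2 :=
  dist_eq_two_of_adj_of_adj (w := inl (Classical.arbitrary α)) (by simpa) (by simp) (by simp)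
    (by simp)

lemma completeBipartiteGraph_dist_ne_zero [Nonempty α] [Nonempty β] {u v : α ⊕ β} (h : u ≠ v) :
    (completeBipartiteGraph α β).dist u v ≠ 0 := by
  rcases u with a | b <;> rcases v with a' | b'
  · simp [completeBipartiteGraph_dist_inl_inl (ne_of_apply_ne inl h)]
  · simp [completeBipartiteGraph_dist_inl_inr]
  · simp [completeBipartiteGraph_dist_inr_inl]
  · simp [completeBipartiteGraph_dist_inr_inr (ne_of_apply_ne inr h)]

lemma isDoublyResolvingSet_completeBipartiteGraph_compl_singleton [Nontrivial β] (a₀ : α) :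
    IsDoublyResolvingSet (completeBipartiteGraph α β) {inl a₀}ᶜ := by
  have : Nonempty α := ⟨a₀⟩
  suffices key : ∀ v, v ≠ inl a₀ → ∃ x ∈ ({inl a₀}ᶜ : Set (α ⊕ β)), ∃ y ∈ ({inl a₀}ᶜ : Set _),
      doublyResolves (completeBipartiteGraph α β) x y (inl a₀) v by
    intro u v huv
    by_cases hu : u = inl a₀
    · exact hu ▸ key v (hu ▸ huv).symm
    by_cases hv : v = inl a₀
    · obtain ⟨x, hx, y, hy, h⟩ := key u hu
      exact ⟨x, hx, y, hy, doublyResolves_comm.mp (hv ▸ h)⟩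
    · exact ⟨u, hu, v, hv, doublyResolves_self (completeBipartiteGraph_dist_ne_zero huv)⟩
  rintro (a | b) hv
  · have ha : a₀ ≠ a := fun h ↦ hv (h ▸ rfl)
    refine ⟨inl a, hv, inr (Classical.arbitrary β), by simp, ?_⟩
    simp [doublyResolves, completeBipartiteGraph_dist_inl_inl ha,
      completeBipartiteGraph_dist_inl_inr]
  · obtain ⟨b', hb'⟩ := exists_ne b
    refine ⟨inr b, by simp, inr b', by simp, ?_⟩
    simp [doublyResolves, completeBipartiteGraph_dist_inl_inr,
      completeBipartiteGraph_dist_inr_inr hb'.symm]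

variable {W : Set (α ⊕ β)}

lemma IsDoublyResolvingSet.inl_mem_or_inl_mem [Nonempty β]
    (hW : IsDoublyResolvingSet (completeBipartiteGraph α β) W) {a a' : α} (h : a ≠ a') :
    inl a ∈ W ∨ inl a' ∈ W := by
  refine hW.mem_or_mem_of_dist_eq (by simpa) fun z hza hza' ↦ ?_
  rcases z with c | b
  · rw [completeBipartiteGraph_dist_inl_inl (ne_of_apply_ne inl hza).symm,
      completeBipartiteGraph_dist_inl_inl (ne_of_apply_ne inl hza').symm]
  · rw [completeBipartiteGraph_dist_inl_inr, completeBipartiteGraph_dist_inl_inr]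

lemma IsDoublyResolvingSet.inr_mem_or_inr_mem [Nonempty α]
    (hW : IsDoublyResolvingSet (completeBipartiteGraph α β) W) {b b' : β} (h : b ≠ b') :
    inr b ∈ W ∨ inr b' ∈ W := by
  refine hW.mem_or_mem_of_dist_eq (by simpa) fun z hzb hzb' ↦ ?_
  rcases z with a | c
  · rw [completeBipartiteGraph_dist_inr_inl, completeBipartiteGraph_dist_inr_inl]
  · rw [completeBipartiteGraph_dist_inr_inr (ne_of_apply_ne inr hzb).symm,
      completeBipartiteGraph_dist_inr_inr (ne_of_apply_ne inr hzb').symm]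

lemma IsDoublyResolvingSet.inl_mem_or_inr_mem [Fintype α] (hα : Fintype.card α ≤ 2)
    (hW : IsDoublyResolvingSet (completeBipartiteGraph α β) W) (a : α) (b : β) :
    inl a ∈ W ∨ inr b ∈ W := by
  classical
  by_contra! h
  have : Nonempty α := ⟨a⟩
  obtain ⟨a', ha'⟩ : ∃ a', ∀ c, c ≠ a → c = a' := by
    have hcard : (Finset.univ.erase a).card ≤ 1 := by
      rw [Finset.card_erase_of_mem (Finset.mem_univ a), Finset.card_univ]
      omega
    obtain ⟨a', hsub⟩ := Finset.card_le_one_iff_subset_singleton.mp hcard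
    exact ⟨a', fun c hc ↦ by simpa using hsub (Finset.mem_erase.mpr ⟨hc, Finset.mem_univ c⟩)⟩
  refine hW.not_forall_dist_sub_eq (u := inl a') (v := inr b) (by simp) (-1) ?_
  rintro (c | c) hz
  · obtain rfl := ha' c fun hca ↦ h.1 (hca ▸ hz)
    simp [completeBipartiteGraph_dist_inr_inl]
  · have hcb : b ≠ c := fun hbc ↦ h.2 (hbc ▸ hz)
    simp [completeBipartiteGraph_dist_inl_inr, completeBipartiteGraph_dist_inr_inr hcb]

lemma IsDoublyResolvingSet.subsingleton_compl_of_completeBipartiteGraph [Fintype α] [Nonempty α]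
    [Nonempty β] (hα : Fintype.card α ≤ 2)
    (hW : IsDoublyResolvingSet (completeBipartiteGraph α β) W) : Wᶜ.Subsingleton := by
  rintro (a | b) hx (a' | b') hy <;> by_contra hne
  · exact (hW.inl_mem_or_inl_mem (ne_of_apply_ne inl hne)).elim hx hy
  · exact (hW.inl_mem_or_inr_mem hα a b').elim hx hy
  · exact (hW.inl_mem_or_inr_mem hα a' b).elim hy hx
  · exact (hW.inr_mem_or_inr_mem (ne_of_apply_ne inr hne)).elim hx hy

theorem psi_completeBipartiteGraph [Fintype α] [Fintype β] [Nonempty α] [Nontrivial β]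
    (hα : Fintype.card α ≤ 2) :
    psi (completeBipartiteGraph α β) = Fintype.card α + Fintype.card β - 1 := by
  classical
  obtain ⟨a₀⟩ := ‹Nonempty α›
  have hW₀ : IsDoublyResolvingSet (completeBipartiteGraph α β) ↑({inl a₀}ᶜ : Finset (α ⊕ β)) := by
    simpa using isDoublyResolvingSet_completeBipartiteGraph_compl_singleton (β := β) a₀
  have hupper := psi_le_card hW₀
  obtain ⟨W, hW, hcard⟩ := exists_isDoublyResolvingSet_card_eq_psi hW₀
  have hcompl : Wᶜ.card ≤ 1 := Finset.card_le_one.mpr fun x hx y hy ↦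
    hW.subsingleton_compl_of_completeBipartiteGraph hα (by simpa using hx) (by simpa using hy)
  rw [Finset.card_compl, Fintype.card_sum] at hcompl hupper
  simp only [Finset.card_singleton] at hupper
  omega

end completeBipartite

end SimpleGraph

/-- For the complete bipartite graph `K_{r,s}` with `1 ≤ r ≤ 2`, `r ≤ s` and
`n = r + s ≥ 3`, the doubly resolving number is `n − 1`. -/
theorem stmt_3 (r s : ℕ) (hr1 : 1 ≤ r) (hr2 : r ≤ 2) (hrs : r ≤ s) (hn : 3 ≤ r + s) :
    psi (completeBipartiteGraph (Fin r) (Fin s)) = r + s - 1 := by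
  have : Nonempty (Fin r) := ⟨⟨0, hr1⟩⟩
  have : Nontrivial (Fin s) := Fin.nontrivial_iff_two_le.mpr (by omega)
  simpa using psi_completeBipartiteGraph (α := Fin r) (β := Fin s) (by simpa using hr2)
end

section
/- Let G be a finite simple connected graph of diameter d and let P = (v_0, v_1, …, v_d) be a shortest path in G of length d. Then the set W = V(G) \ {v_1, v_2, …, v_{d−1}} is a doubly resolving set for G. -/
/-!
Every vertex `b` on a geodesic from `u` to `w` satisfies `d(u,b) + d(b,w) = d(u,w)`, and is
determined by `d(u,b)`. If `a ≠ b` were not doubly resolved by `W`, then `x ↦ d(a,x) - d(b,x)`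
would be constant on `W`. Two vertices of `W` are resolved by themselves. If `a ∈ W` and `b` is
inner, the constant is `-d(a,b)` (take `x = a`), and adding the values at `u` and `w` gives
`d(a,u) + d(a,w) < d(u,w)`, against the triangle inequality. If both are inner, equality at `u`
and `w` forces `d(u,a) = d(u,b)`, hence `a = b`.
-/

open SimpleGraph

namespace SimpleGraph.Walk

variable {V : Type*} {G : SimpleGraph V} [DecidableEq V] {u w a b : V} {p : G.Walk u w}

lemma length_takeUntil_add_length_dropUntil (p : G.Walk u w) (ha : a ∈ p.support) :
    (p.takeUntil a ha).length + (p.dropUntil a ha).length = p.length := by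
  conv_rhs => rw [← p.take_spec ha, length_append]

lemma dist_add_dist_eq_of_mem_support (hp : G.dist u w = p.length) (ha : a ∈ p.support) :
    G.dist u a + G.dist a w = G.dist u w := by
  have := p.length_takeUntil_add_length_dropUntil ha
  have := dist_le (p.takeUntil a ha)
  have := dist_le (p.dropUntil a ha)
  have := (p.takeUntil a ha).reachable.dist_triangle_left w
  omega

lemma length_takeUntil_eq_dist (hp : G.dist u w = p.length) (ha : a ∈ p.support) :
    (p.takeUntil a ha).length = G.dist u a := by
  have := p.length_takeUntil_add_length_dropUntil ha
  have := dist_le (p.takeUntil a ha)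
  have := dist_le (p.dropUntil a ha)
  have := dist_add_dist_eq_of_mem_support hp ha
  omega

lemma eq_of_mem_support_of_dist_eq (hp : G.dist u w = p.length) (ha : a ∈ p.support)
    (hb : b ∈ p.support) (hab : G.dist u a = G.dist u b) : a = b := by
  rw [← p.getVert_length_takeUntil ha, ← p.getVert_length_takeUntil hb,
    length_takeUntil_eq_dist hp, length_takeUntil_eq_dist hp, hab]

end SimpleGraph.Walk

section DoublyResolves

variable {V : Type*} {G : SimpleGraph V} {u w a b x y : V}

theorem doublyResolves.symm (h : doublyResolves G x y a b) : doublyResolves G x y b a := by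
  unfold doublyResolves at *
  omega

lemma doublyResolves_self (hG : G.Connected) (hab : a ≠ b) : doublyResolves G a b a b := by
  have := hG.pos_dist_of_ne hab
  unfold doublyResolves
  rw [dist_self, dist_self, dist_comm]
  omega

lemma doublyResolves_or_of_dist_add_dist_eq (hG : G.Connected) (hab : a ≠ b)
    (hb : G.dist u b + G.dist b w = G.dist u w) :
    doublyResolves G a u a b ∨ doublyResolves G a w a b := by
  by_contra! h
  obtain ⟨hu, hw⟩ := h
  unfold doublyResolves at hu hw
  rw [dist_self, dist_comm (u := b) (v := u)] at hu
  rw [dist_self] at hw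
  have := hG.pos_dist_of_ne hab.symm
  have : G.dist u w ≤ G.dist u a + G.dist a w := hG.dist_triangle
  rw [dist_comm (u := u) (v := a)] at this
  omega

lemma SimpleGraph.Walk.doublyResolves_of_mem_support [DecidableEq V] {p : G.Walk u w}
    (hp : G.dist u w = p.length) (ha : a ∈ p.support) (hb : b ∈ p.support) (hab : a ≠ b) :
    doublyResolves G u w a b := by
  intro h
  rw [dist_comm (u := a), dist_comm (u := b)] at h
  have := p.dist_add_dist_eq_of_mem_support hp ha
  have := p.dist_add_dist_eq_of_mem_support hp hb
  exact hab (p.eq_of_mem_support_of_dist_eq hp ha hb (by omega))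

end DoublyResolves

theorem stmt_6_general {V : Type*} (G : SimpleGraph V) (hG : G.Connected)
    (u w : V) (p : G.Walk u w) (hshortest : G.dist u w = p.length) :
    IsDoublyResolvingSet G {x : V | x = u ∨ x = w ∨ x ∉ p.support} := by
  classical
  set W := {x : V | x = u ∨ x = w ∨ x ∉ p.support}
  have huW : u ∈ W := Or.inl rfl
  have hwW : w ∈ W := Or.inr (Or.inl rfl)
  have hinner : ∀ x ∉ W, x ∈ p.support := fun x hx => by_contra fun h => hx (Or.inr (Or.inr h))
  intro a b hab
  by_cases ha : a ∈ W <;> by_cases hb : b ∈ W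
  · exact ⟨a, ha, b, hb, doublyResolves_self hG hab⟩
  · obtain h | h := doublyResolves_or_of_dist_add_dist_eq hG hab
      (p.dist_add_dist_eq_of_mem_support hshortest (hinner b hb))
    exacts [⟨a, ha, u, huW, h⟩, ⟨a, ha, w, hwW, h⟩]
  · obtain h | h := doublyResolves_or_of_dist_add_dist_eq hG hab.symm
      (p.dist_add_dist_eq_of_mem_support hshortest (hinner a ha))
    exacts [⟨b, hb, u, huW, h.symm⟩, ⟨b, hb, w, hwW, h.symm⟩]
  · exact ⟨u, huW, w, hwW, p.doublyResolves_of_mem_support hshortest (hinner a ha) (hinner b hb) hab⟩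

/-- If `p` is a shortest path of length `diam G` between `u` and `w`, then the set of
all vertices except the internal vertices of `p` is a doubly resolving set for `G`. -/
theorem stmt_6 {V : Type*} [Fintype V] (G : SimpleGraph V) (hG : G.Connected)
    (u w : V) (p : G.Walk u w) (hp : p.IsPath)
    (hlen : p.length = G.diam) (hshortest : G.dist u w = p.length) :
    IsDoublyResolvingSet G {x : V | x = u ∨ x = w ∨ x ∉ p.support} :=
  stmt_6_general G hG u w p hshortest
end

section
/- Let G be a finite simple connected graph of order at least 2 and let v be a vertex of degree 1 in G. Then v belongs to every doubly resolving set of G of minimum cardinality (every doubly basis of G). -/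
open SimpleGraph

/-- A shortest walk from `v` to `w ≠ v` has to leave `v` through its only neighbor `u`. -/
theorem SimpleGraph.Reachable.dist_eq_dist_add_one_of_unique_adj {V : Type*} {G : SimpleGraph V}
    {u v w : V} (hvw : G.Reachable v w) (hw : w ≠ v) (hvu : G.Adj v u)
    (hu : ∀ x, G.Adj v x → x = u) :
    G.dist v w = G.dist u w + 1 := by
  have hle : G.dist v w ≤ G.dist u w + 1 := by
    have := hvu.reachable.dist_triangle_left w
    rw [dist_eq_one_iff_adj.mpr hvu] at this
    omega
  obtain ⟨p, hp⟩ := hvw.exists_walk_length_eq_dist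
  cases p with
  | nil => exact absurd rfl hw
  | cons hx q =>
    obtain rfl := hu _ hx
    have := dist_le q
    rw [Walk.length_cons] at hp
    omega

/-- If `v ∉ W`, then `d(v, x) - d(u, x) = 1` for every `x ∈ W`, so `v` and its neighbor `u` are
not doubly resolved by `W`. -/
theorem IsDoublyResolvingSet.mem_of_existsUnique_adj {V : Type*} {G : SimpleGraph V}
    {W : Set V} (hW : IsDoublyResolvingSet G W) (hG : G.Connected) {v : V}
    (hv : ∃! u, G.Adj v u) : v ∈ W := by
  obtain ⟨u, hvu, hu⟩ := hv
  by_contra hvW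
  obtain ⟨x, hx, y, hy, hxy⟩ := hW u v hvu.ne.symm
  have hdist {z : V} (hz : z ∈ W) : G.dist v z = G.dist u z + 1 :=
    (hG v z).dist_eq_dist_add_one_of_unique_adj (ne_of_mem_of_not_mem hz hvW) hvu hu
  apply hxy
  rw [hdist hx, hdist hy]
  push_cast
  ring

theorem stmt_10_general {V : Type*} [Fintype V] (G : SimpleGraph V) [DecidableRel G.Adj]
    (hG : G.Connected) (v : V) (hv : G.degree v = 1)
    (B : Finset V) (hB : IsDoublyResolvingSet G ↑B) :
    v ∈ B :=
  hB.mem_of_existsUnique_adj hG (degree_eq_one_iff_existsUnique_adj.mp hv)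

/-- A vertex of degree `1` belongs to every doubly resolving set of minimum
cardinality (every doubly basis). -/
theorem stmt_10 {V : Type*} [Fintype V] (G : SimpleGraph V) [DecidableRel G.Adj]
    (hG : G.Connected) (hn : 2 ≤ Fintype.card V) (v : V) (hv : G.degree v = 1)
    (B : Finset V) (hB : IsDoublyResolvingSet G ↑B) (hBmin : B.card = psi G) :
    v ∈ B :=
  stmt_10_general G hG v hv B hB
end

section
/- Let G be a finite simple connected graph of order at least 2. Then ψ(G) ≥ l(G), where l(G) is the number of vertices of degree 1 in G. -/
open SimpleGraph

/-!
If `v` is a leaf with neighbour `u`, every shortest path from `v` to another vertex `x` passes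
through `u`, so `d(v,x) = d(u,x) + 1`. Hence `d(u,x) - d(v,x) = -1` for every `x ≠ v`, and no
two vertices other than `v` doubly resolve the pair `u, v`: every doubly resolving set contains
every leaf.
-/

namespace SimpleGraph

variable {V : Type*} {G : SimpleGraph V}

theorem Reachable.dist_eq_dist_add_one_of_forall_adj_eq {u v x : V} (hx : G.Reachable v x)
    (hxv : x ≠ v) (hadj : G.Adj v u) (huniq : ∀ w, G.Adj v w → w = u) :
    G.dist v x = G.dist u x + 1 := by
  have hle : G.dist v x ≤ G.dist v u + G.dist u x := hadj.reachable.dist_triangle_left x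
  rw [dist_eq_one_iff_adj.2 hadj] at hle
  obtain ⟨p, hp⟩ := hx.exists_walk_length_eq_dist
  cases p with
  | nil => exact absurd rfl hxv
  | @cons _ w _ hvw q =>
    obtain rfl := huniq w hvw
    have hge : G.dist w x ≤ q.length := dist_le q
    rw [Walk.length_cons] at hp
    omega

theorem Preconnected.not_doublyResolves_of_forall_adj_eq (hG : G.Preconnected) {u v x y : V}
    (hadj : G.Adj v u) (huniq : ∀ w, G.Adj v w → w = u) (hxv : x ≠ v) (hyv : y ≠ v) :
    ¬ doublyResolves G x y u v := by
  have hx := (hG v x).dist_eq_dist_add_one_of_forall_adj_eq hxv hadj huniq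
  have hy := (hG v y).dist_eq_dist_add_one_of_forall_adj_eq hyv hadj huniq
  simp only [doublyResolves, hx, hy, not_not]
  push_cast
  ring

theorem IsDoublyResolvingSet.mem_of_degree_eq_one {W : Set V} (hW : IsDoublyResolvingSet G W)
    (hG : G.Preconnected) {v : V} [Fintype (G.neighborSet v)] (hv : G.degree v = 1) : v ∈ W := by
  obtain ⟨u, hadj, huniq⟩ := degree_eq_one_iff_existsUnique_adj.1 hv
  by_contra hvW
  obtain ⟨x, hx, y, hy, hres⟩ := hW u v hadj.symm.ne
  exact hG.not_doublyResolves_of_forall_adj_eq hadj huniq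
    (fun h => hvW (h ▸ hx)) (fun h => hvW (h ▸ hy)) hres

theorem Preconnected.isDoublyResolvingSet_univ (hG : G.Preconnected) :
    IsDoublyResolvingSet G Set.univ := by
  intro u v huv
  refine ⟨u, trivial, v, trivial, ?_⟩
  have hpos : 0 < G.dist u v := (hG u v).pos_dist_of_ne huv
  simp only [doublyResolves, dist_self, dist_comm (u := v)]
  omega

end SimpleGraph

theorem stmt_11_general {V : Type*} [Fintype V] (G : SimpleGraph V) [DecidableRel G.Adj]
    (hG : G.Connected) :
    (Finset.univ.filter fun v : V => G.degree v = 1).card ≤ psi G := by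
  -- `sInf ∅ = 0`, so some finite doubly resolving set has to be exhibited.
  refine le_csInf ⟨_, Finset.univ, rfl, ?_⟩ ?_
  · simpa using hG.preconnected.isDoublyResolvingSet_univ
  · rintro k ⟨W, rfl, hW⟩
    refine Finset.card_le_card fun v hv => ?_
    exact hW.mem_of_degree_eq_one hG.preconnected (Finset.mem_filter.1 hv).2

/-- The doubly resolving number of a connected graph of order `≥ 2` is at least the
number of its leaves (vertices of degree `1`). -/
theorem stmt_11 {V : Type*} [Fintype V] (G : SimpleGraph V) [DecidableRel G.Adj]
    (hG : G.Connected) (hn : 2 ≤ Fintype.card V) :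
    (Finset.univ.filter fun v : V => G.degree v = 1).card ≤ psi G :=
  stmt_11_general G hG
end
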